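/- arXiv:2402.07740 — 7 statements merged into one kernel-verified Lean document; each statement's English description precedes it below -/
import Mathlib

section
/- The function G defined by the Weierstrass product satisfies the functional equation G(x+1) = Γ(x)·G(x) for every real x > 0. -/
open Real

/-- The double gamma function, defined by its Weierstrass product. -/
noncomputable def doubleGamma (x : ℝ) : ℝ :=
  (2 * π) ^ ((x - 1) / 2) *
    Real.exp (-(x - 1) * x / 2 - Real.eulerMascheroniConstant * (x - 1) ^ 2 / 2) *
    ∏' n : ℕ,
      ((1 + (x - 1) / (n + 1)) ^ (n + 1) *
        Real.exp (-(x - 1) + (x - 1) ^ 2 / (2 * (n + 1))))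

/-!
With `f_k(t) = (1 + t/(k+1))^(k+1) exp(-t + t²/(2(k+1)))`, the partial products
`P_N(x) = (2π)^((x-1)/2) exp(-(x-1)x/2 - γ(x-1)²/2) ∏_{k<N} f_k(x-1)` converge to `G(x)`, since
`log f_k(t) = (k+1) (log (1 + u) - u + u²/2)` with `u = t/(k+1)` is `O(1/k²)`.
As `1 + t/(k+1) = (t+1+k)/(k+1)`, the quotient `P_N(x+1) / P_N(x)` telescopes to
`C_N(x) = √(2π) exp(-x - N + (x - 1/2)(H_N - γ)) (x+N)^N / ∏_{k<N} (x+k)`.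
Comparing `C_N(x)` with Euler's sequence `N^x N! / ∏_{k≤N} (x+k)` by means of Stirling's formula,
`H_N - log N → γ` and `(1 + x/N)^N → e^x` shows `C_N(x) → Γ(x)`.
-/

open Filter Topology Finset

theorem prod_range_pow_succ_mul_prod {M : Type*} [CommMonoid M] (a : ℕ → M) (N : ℕ) :
    (∏ k ∈ range N, a (k + 1) ^ (k + 1)) * ∏ k ∈ range N, a k =
      a N ^ N * ∏ k ∈ range N, a k ^ (k + 1) := by
  have shift : ∏ k ∈ range N, a (k + 1) ^ (k + 1) = (∏ k ∈ range N, a k ^ k) * a N ^ N := by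
    rw [← prod_range_succ, prod_range_succ' (fun k => a k ^ k), pow_zero, mul_one]
  rw [shift]
  simp only [pow_succ, prod_mul_distrib]
  ac_rfl

theorem abs_log_one_add_sub_le {u : ℝ} (hu : |u| ≤ 1 / 2) :
    |log (1 + u) - u + u ^ 2 / 2| ≤ 2 * |u| ^ 3 := by
  have h := abs_log_sub_add_sum_range_le (x := -u) (by rw [abs_neg]; linarith) 2
  have taylor : ∑ i ∈ range 2, (-u) ^ (i + 1) / (i + 1) + log (1 - -u) =
      log (1 + u) - u + u ^ 2 / 2 := by
    simp only [sum_range_succ, sum_range_zero]; norm_num; ring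
  rw [taylor, abs_neg] at h
  refine h.trans ?_
  rw [div_le_iff₀ (by linarith), show 2 + 1 = 3 from rfl]
  nlinarith [mul_nonneg (pow_nonneg (abs_nonneg u) 3) (by linarith : (0 : ℝ) ≤ 1 / 2 - |u|)]

theorem exp_mul_sub_log_mul_rpow_mul_sqrt (a h : ℝ) {y : ℝ} (hy : 0 < y) :
    exp (a * (h - log y)) * y ^ (a + 1 / 2) * √y = exp (a * h) * y := by
  rw [sqrt_eq_rpow, mul_assoc, ← rpow_add hy, rpow_def_of_pos hy, ← exp_add]
  nth_rewrite 3 [← exp_log hy]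
  rw [← exp_add]
  ring_nf

theorem tendsto_exp_mul_harmonic_sub_eulerMascheroni_sub_log (a : ℝ) :
    Tendsto (fun N : ℕ => exp (a * (harmonic N - eulerMascheroniConstant - log N))) atTop
      (𝓝 1) := by
  have h := ((tendsto_harmonic_sub_log.sub_const eulerMascheroniConstant).const_mul a).rexp
  simp only [sub_self, mul_zero, exp_zero] at h
  exact h.congr fun N => by ring_nf

theorem tendsto_sqrt_pi_div_stirlingSeq :
    Tendsto (fun N : ℕ => √π / Stirling.stirlingSeq N) atTop (𝓝 1) := by
  have hπ : √π ≠ 0 := by positivity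
  have h := (tendsto_const_nhds (x := √π)).div Stirling.tendsto_stirlingSeq_sqrt_pi hπ
  rwa [div_self hπ] at h

theorem tendsto_one_add_div_pow_succ_mul_exp_neg (x : ℝ) :
    Tendsto (fun N : ℕ => (1 + x / N) ^ (N + 1) * exp (-x)) atTop (𝓝 1) := by
  have h := ((tendsto_one_add_div_pow_exp x).mul
    ((tendsto_const_div_atTop_nhds_zero_nat x).const_add 1)).mul_const (exp (-x))
  rw [add_zero, mul_one, ← exp_add, add_neg_cancel, exp_zero] at h
  simpa only [pow_succ] using h

noncomputable def gammaApprox (x : ℝ) (N : ℕ) : ℝ :=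
  √(2 * π) * exp (-x - N + (x - 1 / 2) * (harmonic N - eulerMascheroniConstant)) *
    ((x + N) ^ N / ∏ k ∈ range N, (x + k))

theorem gammaApprox_eq {x : ℝ} (hx : ∀ k : ℕ, x + k ≠ 0) {N : ℕ} (hN : N ≠ 0) :
    gammaApprox x N = GammaSeq x N * (√π / Stirling.stirlingSeq N) *
      exp ((x - 1 / 2) * (harmonic N - eulerMascheroniConstant - log N)) *
      ((1 + x / N) ^ (N + 1) * exp (-x)) := by
  have hN0 : (0 : ℝ) < N := by positivity
  have hprod : ∏ k ∈ range N, (x + k) ≠ 0 := prod_ne_zero_iff.mpr fun k _ => hx k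
  have hxN := hx N
  have key :=
    exp_mul_sub_log_mul_rpow_mul_sqrt (x - 1 / 2) (harmonic N - eulerMascheroniConstant) hN0
  rw [sub_add_cancel] at key
  rw [gammaApprox, GammaSeq, Stirling.stirlingSeq, prod_range_succ, sqrt_mul zero_le_two,
    sqrt_mul zero_le_two, div_pow, ← exp_nat_mul, mul_one,
    show -x - N + (x - 1 / 2) * (harmonic N - eulerMascheroniConstant) =
      -x + (x - 1 / 2) * (harmonic N - eulerMascheroniConstant) - N by ring, exp_sub, exp_add,
    one_add_div hN0.ne', div_pow]
  set E := exp ((x - 1 / 2) * (harmonic N - eulerMascheroniConstant))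
  set U := exp ((x - 1 / 2) * (harmonic N - eulerMascheroniConstant - log N))
  field_simp
  linear_combination (-(N : ℝ) ^ N * (x + N) ^ (N + 1)) * key

theorem tendsto_gammaApprox {x : ℝ} (hx : ∀ k : ℕ, x + k ≠ 0) :
    Tendsto (gammaApprox x) atTop (𝓝 (Gamma x)) := by
  have h := (((GammaSeq_tendsto_Gamma x).mul tendsto_sqrt_pi_div_stirlingSeq).mul
    (tendsto_exp_mul_harmonic_sub_eulerMascheroni_sub_log (x - 1 / 2))).mul
    (tendsto_one_add_div_pow_succ_mul_exp_neg x)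
  simp only [mul_one] at h
  refine h.congr' ?_
  filter_upwards [eventually_ne_atTop 0] with N hN
  exact (gammaApprox_eq hx hN).symm

namespace DoubleGamma

noncomputable def factor (t : ℝ) (n : ℕ) : ℝ :=
  (1 + t / (n + 1)) ^ (n + 1) * exp (-t + t ^ 2 / (2 * (n + 1)))

noncomputable def prefactor (x : ℝ) : ℝ :=
  (2 * π) ^ ((x - 1) / 2) * exp (-(x - 1) * x / 2 - eulerMascheroniConstant * (x - 1) ^ 2 / 2)

theorem one_add_div_pos {t : ℝ} (ht : -1 < t) (n : ℕ) : 0 < 1 + t / (n + 1) := by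
  rw [add_div' _ _ _ (by positivity)]
  exact div_pos (by linarith [(n.cast_nonneg : (0 : ℝ) ≤ n)]) (by positivity)

theorem factor_pos {t : ℝ} (ht : -1 < t) (n : ℕ) : 0 < factor t n :=
  mul_pos (pow_pos (one_add_div_pos ht n) _) (exp_pos _)

theorem log_factor {t : ℝ} (ht : -1 < t) (n : ℕ) :
    log (factor t n) =
      (n + 1) * (log (1 + t / (n + 1)) - t / (n + 1) + (t / (n + 1)) ^ 2 / 2) := by
  rw [factor, log_mul (pow_pos (one_add_div_pos ht n) _).ne' (exp_pos _).ne', log_pow, log_exp]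
  field_simp
  push_cast
  ring

theorem summable_log_factor {t : ℝ} (ht : -1 < t) : Summable fun n => log (factor t n) := by
  have hbound : Summable fun n : ℕ => 2 * |t| ^ 3 / ((n : ℝ) + 1) ^ 2 := by
    have := (summable_nat_add_iff 1).mpr (summable_one_div_nat_pow.mpr one_lt_two)
    simpa [div_eq_mul_inv] using this.mul_left (2 * |t| ^ 3)
  refine hbound.of_norm_bounded_eventually_nat ?_
  filter_upwards [eventually_ge_atTop ⌈2 * |t|⌉₊] with n hn
  have hn1 : (0 : ℝ) < n + 1 := by positivity
  have hu : |t / (n + 1)| ≤ 1 / 2 := by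
    rw [abs_div, abs_of_pos hn1, div_le_iff₀ hn1]
    linarith [(Nat.ceil_le.mp hn : 2 * |t| ≤ n)]
  calc ‖log (factor t n)‖
      = (n + 1) * |log (1 + t / (n + 1)) - t / (n + 1) + (t / (n + 1)) ^ 2 / 2| := by
        rw [norm_eq_abs, log_factor ht, abs_mul, abs_of_pos hn1]
    _ ≤ (n + 1) * (2 * |t / (n + 1)| ^ 3) := by gcongr; exact abs_log_one_add_sub_le hu
    _ = 2 * |t| ^ 3 / ((n : ℝ) + 1) ^ 2 := by
        rw [abs_div, abs_of_pos hn1]; field_simp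

theorem multipliable_factor {t : ℝ} (ht : -1 < t) : Multipliable (factor t) :=
  multipliable_of_summable_log (factor_pos ht) (summable_log_factor ht)

theorem tendsto_prefactor_mul_prod_range_factor {x : ℝ} (hx : 0 < x) :
    Tendsto (fun N => prefactor x * ∏ k ∈ range N, factor (x - 1) k) atTop
      (𝓝 (doubleGamma x)) :=
  ((multipliable_factor (by linarith)).hasProd.tendsto_prod_nat).const_mul _

theorem prefactor_add_one (x : ℝ) :
    prefactor (x + 1) =
      √(2 * π) * exp (-x - eulerMascheroniConstant * (x - 1 / 2)) * prefactor x := by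
  rw [prefactor, prefactor, show (x + 1 - 1) / 2 = 1 / 2 + (x - 1) / 2 by ring,
    rpow_add (by positivity), ← sqrt_eq_rpow,
    show -(x + 1 - 1) * (x + 1) / 2 - eulerMascheroniConstant * (x + 1 - 1) ^ 2 / 2 =
      (-x - eulerMascheroniConstant * (x - 1 / 2)) +
        (-(x - 1) * x / 2 - eulerMascheroniConstant * (x - 1) ^ 2 / 2) by ring,
    exp_add]
  ring

theorem prod_range_factor (t : ℝ) (N : ℕ) :
    ∏ k ∈ range N, factor t k =
      (∏ k ∈ range N, (1 + t / (k + 1)) ^ (k + 1)) * exp (-(N * t) + t ^ 2 / 2 * harmonic N) := by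
  simp only [factor]
  rw [prod_mul_distrib, ← exp_sum, sum_add_distrib]
  congr 2
  push_cast [harmonic, mul_sum, sum_const, card_range, nsmul_eq_mul]
  congr 1
  · ring
  · exact sum_congr rfl fun k _ => by field_simp

theorem prod_one_add_div_pow_mul_prod (x : ℝ) (N : ℕ) :
    (∏ k ∈ range N, (1 + x / (k + 1)) ^ (k + 1)) * ∏ k ∈ range N, (x + k) =
      (x + N) ^ N * ∏ k ∈ range N, (1 + (x - 1) / (k + 1)) ^ (k + 1) := by
  have hsucc (k : ℕ) : 1 + x / (k + 1) = (x + ↑(k + 1)) / (k + 1) := by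
    field_simp; push_cast; ring
  have hself (k : ℕ) : 1 + (x - 1) / (k + 1) = (x + k) / (k + 1) := by field_simp; ring
  simp_rw [hsucc, hself, div_pow, prod_div_distrib]
  rw [div_mul_eq_mul_div, prod_range_pow_succ_mul_prod (fun k => x + k), mul_div_assoc]

theorem prefactor_mul_prod_range_factor_add_one {x : ℝ} (hx : ∀ k : ℕ, x + k ≠ 0) (N : ℕ) :
    prefactor (x + 1) * ∏ k ∈ range N, factor x k =
      gammaApprox x N * (prefactor x * ∏ k ∈ range N, factor (x - 1) k) := by
  have hprod : ∏ k ∈ range N, (x + k) ≠ 0 := prod_ne_zero_iff.mpr fun k _ => hx k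
  have hexp : exp (-x - eulerMascheroniConstant * (x - 1 / 2)) *
        exp (-(N * x) + x ^ 2 / 2 * harmonic N) =
      exp (-x - N + (x - 1 / 2) * (harmonic N - eulerMascheroniConstant)) *
        exp (-(N * (x - 1)) + (x - 1) ^ 2 / 2 * harmonic N) := by
    rw [← exp_add, ← exp_add]; ring_nf
  have hQ := eq_div_of_mul_eq hprod (prod_one_add_div_pow_mul_prod x N)
  rw [prod_range_factor, prod_range_factor, prefactor_add_one, gammaApprox, hQ]
  linear_combination (√(2 * π) * prefactor x * ((x + N) ^ N *
    (∏ k ∈ range N, (1 + (x - 1) / (k + 1)) ^ (k + 1)) / ∏ k ∈ range N, (x + k))) * hexp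

end DoubleGamma

open DoubleGamma in
theorem doubleGamma_add_one (x : ℝ) (hx : 0 < x) :
    doubleGamma (x + 1) = Real.Gamma x * doubleGamma x := by
  have hshift := tendsto_prefactor_mul_prod_range_factor (x := x + 1) (by linarith)
  rw [add_sub_cancel_right] at hshift
  have hxk (k : ℕ) : x + k ≠ 0 := by positivity
  refine tendsto_nhds_unique hshift
    (((tendsto_gammaApprox hxk).mul (tendsto_prefactor_mul_prod_range_factor hx)).congr fun N => ?_)
  exact (prefactor_mul_prod_range_factor_add_one hxk N).symm
end

section
/- Malmsten's formula: for every real x > 0, ln Γ(x) = ∫_0^∞ (e^{−u}/u) · ( (x−1) − (1 − e^{−(x−1)u})/(1 − e^{−u}) ) du. -/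
/-!
By the Bohr–Mollerup theorem it suffices that the integral `M x` vanishes at `1`, is convex on
`(0, ∞)` and satisfies `M (x + 1) = M x + log x`. Convexity holds pointwise: for fixed `u` the
integrand is an affine function of `x` plus a positive multiple of `exp (-(x - 1) u)`. The
integrands at `x + 1` and `x` differ by the Frullani integrand `(e^{-u} - e^{-xu}) / u`, whose
integral is `log x`.
-/

open Real MeasureTheory Set Filter

noncomputable def malmstenIntegrand (x u : ℝ) : ℝ :=
  (exp (-u) / u) * ((x - 1) - (1 - exp (-(x - 1) * u)) / (1 - exp (-u)))

lemma one_sub_exp_neg_pos {u : ℝ} (hu : 0 < u) : 0 < 1 - exp (-u) :=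
  sub_pos.mpr (exp_lt_one_iff.mpr (neg_neg_of_pos hu))

lemma half_le_one_sub_exp_neg {u : ℝ} (hu₀ : 0 ≤ u) (hu : u ≤ 1 / 2) :
    u / 2 ≤ 1 - exp (-u) := by
  have h := abs_le.mp
    (abs_exp_sub_one_sub_id_le (x := -u) (by rw [abs_neg, abs_of_nonneg hu₀]; linarith))
  nlinarith [h.1]

lemma abs_mul_one_sub_exp_neg_sub_le {a u : ℝ} (hu : |u| ≤ 1) (hau : |a * u| ≤ 1) :
    |a * (1 - exp (-u)) - (1 - exp (-a * u))| ≤ (a ^ 2 + |a|) * u ^ 2 := by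
  have h₁ := abs_exp_sub_one_sub_id_le (x := -a * u) (by rwa [neg_mul, abs_neg])
  have h₂ := abs_exp_sub_one_sub_id_le (x := -u) (by rwa [abs_neg])
  calc |a * (1 - exp (-u)) - (1 - exp (-a * u))|
      = |(exp (-a * u) - 1 - -a * u) - a * (exp (-u) - 1 - -u)| := by ring_nf
    _ ≤ |exp (-a * u) - 1 - -a * u| + |a| * |exp (-u) - 1 - -u| := by
        rw [← abs_mul]; exact abs_sub _ _
    _ ≤ (-a * u) ^ 2 + |a| * (-u) ^ 2 := by gcongr
    _ = (a ^ 2 + |a|) * u ^ 2 := by ring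

lemma convexOn_integral {α E : Type*} [MeasurableSpace α] {μ : Measure α} [AddCommGroup E]
    [Module ℝ E] {s : Set E} {F : E → α → ℝ} (hs : Convex ℝ s)
    (hF : ∀ x ∈ s, Integrable (F x) μ) (hconv : ∀ᵐ u ∂μ, ConvexOn ℝ s (F · u)) :
    ConvexOn ℝ s (fun x => ∫ u, F x u ∂μ) := by
  refine ⟨hs, fun x hx y hy a b ha hb hab => ?_⟩
  calc ∫ u, F (a • x + b • y) u ∂μ ≤ ∫ u, (a * F x u + b * F y u) ∂μ :=
        integral_mono_ae (hF _ (hs hx hy ha hb hab))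
          (((hF x hx).const_mul a).add ((hF y hy).const_mul b))
          (hconv.mono fun u hu => hu.2 hx hy ha hb hab)
    _ = a • ∫ u, F x u ∂μ + b • ∫ u, F y u ∂μ := by
        rw [integral_add ((hF x hx).const_mul a) ((hF y hy).const_mul b), integral_const_mul,
          integral_const_mul, smul_eq_mul, smul_eq_mul]

lemma convexOn_mul_add_mul_exp_mul (a b c : ℝ) {B : ℝ} (hB : 0 ≤ B) :
    ConvexOn ℝ univ (fun x => a * x + B * exp (c * x) + b) :=
  (((LinearMap.mul ℝ ℝ a).convexOn convex_univ).add
    ((convexOn_exp.comp_linearMap (LinearMap.mul ℝ ℝ c)).smul hB)).add_const b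

lemma continuousOn_malmstenIntegrand (x : ℝ) : ContinuousOn (malmstenIntegrand x) (Ioi 0) := by
  unfold malmstenIntegrand
  fun_prop (disch := first
    | exact fun u hu => ne_of_gt hu
    | exact fun u hu => (one_sub_exp_neg_pos hu).ne')

/-- The bound `(|x - 1| + 2)⁻¹` on `u` keeps `u ≤ 1 / 2` and `|(x - 1) u| ≤ 1`, so that the
second-order Taylor bound on the numerator and the bound `u / 2 ≤ 1 - e^{-u}` both apply. -/
lemma abs_malmstenIntegrand_le_of_le_inv {x u : ℝ} (hu : 0 < u) (hux : u ≤ (|x - 1| + 2)⁻¹) :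
    |malmstenIntegrand x u| ≤ 2 * ((x - 1) ^ 2 + |x - 1|) := by
  have hu₂ : u ≤ 1 / 2 := hux.trans (by rw [one_div]; gcongr; linarith [abs_nonneg (x - 1)])
  have hxu : |(x - 1) * u| ≤ 1 := by
    have h := mul_le_mul_of_nonneg_right hux (by positivity : (0 : ℝ) ≤ |x - 1| + 2)
    rw [inv_mul_cancel₀ (by positivity)] at h
    rw [abs_mul, abs_of_pos hu]
    nlinarith
  have hD := one_sub_exp_neg_pos hu
  have hN := abs_mul_one_sub_exp_neg_sub_le (a := x - 1) (by rw [abs_of_pos hu]; linarith) hxu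
  have heq : malmstenIntegrand x u = exp (-u) / u *
      (((x - 1) * (1 - exp (-u)) - (1 - exp (-(x - 1) * u))) / (1 - exp (-u))) := by
    unfold malmstenIntegrand; field_simp
  calc |malmstenIntegrand x u| ≤ 1 / u * (((x - 1) ^ 2 + |x - 1|) * u ^ 2 / (u / 2)) := by
        rw [heq, abs_mul, abs_div, abs_div, abs_of_pos (exp_pos _), abs_of_pos hu, abs_of_pos hD]
        gcongr
        · exact exp_le_one_iff.mpr (by linarith)
        · exact half_le_one_sub_exp_neg hu.le hu₂
    _ = 2 * ((x - 1) ^ 2 + |x - 1|) := by field_simp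

lemma abs_malmstenIntegrand_le_of_one_le {x u : ℝ} (hu : 1 ≤ u) :
    |malmstenIntegrand x u| ≤
      (|x - 1| + (1 - exp (-1))⁻¹) * exp (-u) + (1 - exp (-1))⁻¹ * exp (-x * u) := by
  set c := 1 - exp (-1)
  have hc : 0 < c := one_sub_exp_neg_pos one_pos
  have hD : c ≤ 1 - exp (-u) := sub_le_sub_left (exp_le_exp.mpr (neg_le_neg hu)) 1
  have hexp : exp (-u) * exp (-(x - 1) * u) = exp (-x * u) := by rw [← exp_add]; ring_nf
  have hquot : |(1 - exp (-(x - 1) * u)) / (1 - exp (-u))| ≤ (1 + exp (-(x - 1) * u)) / c := by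
    rw [abs_div, abs_of_pos (hc.trans_le hD)]
    gcongr
    exact abs_sub_le_iff.mpr
      ⟨by linarith [exp_pos (-(x - 1) * u)], by linarith [exp_pos (-(x - 1) * u)]⟩
  calc |malmstenIntegrand x u|
      ≤ exp (-u) * (|x - 1| + (1 + exp (-(x - 1) * u)) / c) := by
        rw [malmstenIntegrand, abs_mul, abs_div, abs_of_pos (exp_pos _), abs_of_pos (by linarith)]
        gcongr
        · exact div_le_self (exp_pos _).le hu
        · exact (abs_sub _ _).trans (by gcongr)
    _ = (|x - 1| + c⁻¹) * exp (-u) + c⁻¹ * exp (-x * u) := by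
        rw [← hexp]; field_simp; ring

lemma integrableOn_malmstenIntegrand {x : ℝ} (hx : 0 < x) :
    IntegrableOn (malmstenIntegrand x) (Ioi 0) := by
  have hcont := continuousOn_malmstenIntegrand x
  refine integrableOn_Ioi_iff_integrableAtFilter_atTop_nhdsWithin.mpr
    ⟨⟨Ioi 1, Ioi_mem_atTop 1, ?_⟩, ⟨Ioc 0 (|x - 1| + 2)⁻¹, Ioc_mem_nhdsGT (by positivity), ?_⟩,
      hcont.locallyIntegrableOn measurableSet_Ioi⟩
  · refine Integrable.mono'
      (((exp_neg_integrableOn_Ioi 1 one_pos).const_mul (|x - 1| + (1 - exp (-1))⁻¹)).add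
        ((exp_neg_integrableOn_Ioi 1 hx).const_mul (1 - exp (-1))⁻¹))
      ((hcont.mono (Ioi_subset_Ioi zero_le_one)).aestronglyMeasurable measurableSet_Ioi)
      ((ae_restrict_iff' measurableSet_Ioi).mpr (ae_of_all _ fun u hu => ?_))
    simpa using abs_malmstenIntegrand_le_of_one_le (x := x) (le_of_lt hu)
  · refine Integrable.mono'
      (integrableOn_const (C := 2 * ((x - 1) ^ 2 + |x - 1|)) measure_Ioc_lt_top.ne)
      ((hcont.mono Ioc_subset_Ioi_self).aestronglyMeasurable measurableSet_Ioc)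
      ((ae_restrict_iff' measurableSet_Ioc).mpr (ae_of_all _ fun u hu => ?_))
    exact abs_malmstenIntegrand_le_of_le_inv hu.1 hu.2

lemma malmstenIntegrand_add_one (x : ℝ) {u : ℝ} (hu : 0 < u) :
    malmstenIntegrand (x + 1) u = malmstenIntegrand x u + (exp (-u) - exp (-(x * u))) / u := by
  have := (one_sub_exp_neg_pos hu).ne'
  have hexp : exp (-u) * exp (-(x - 1) * u) = exp (-(x * u)) := by rw [← exp_add]; ring_nf
  rw [malmstenIntegrand, malmstenIntegrand, show -(x + 1 - 1) * u = -(x * u) by ring, ← hexp]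
  field_simp
  ring

lemma convexOn_malmstenIntegrand_left {u : ℝ} (hu : 0 < u) :
    ConvexOn ℝ univ (malmstenIntegrand · u) := by
  set A := exp (-u) / u
  set B := exp (-u) / (u * (1 - exp (-u)))
  have hB : 0 ≤ B * exp u :=
    mul_nonneg (div_nonneg (exp_pos _).le (mul_pos hu (one_sub_exp_neg_pos hu)).le) (exp_pos _).le
  refine (convexOn_mul_add_mul_exp_mul A (-A - B) (-u) hB).congr fun x _ => ?_
  have := (one_sub_exp_neg_pos hu).ne'
  have hexp : exp (-(x - 1) * u) = exp u * exp (-u * x) := by rw [← exp_add]; ring_nf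
  simp only [malmstenIntegrand, A, B, hexp]
  field_simp
  ring

lemma integral_exp_neg_sub_exp_neg_mul_div {y : ℝ} (hy : 0 < y)
    (hint : IntegrableOn (fun u => (exp (-u) - exp (-(y * u))) / u) (Ioi 0)) :
    ∫ u in Ioi 0, (exp (-u) - exp (-(y * u))) / u = log y := by
  have hcont : Continuous fun t : ℝ => exp (-t) := by fun_prop
  have h := Frullani.integral_Ioi_eq (f := fun t => exp (-t)) (L := 1) (R := 0)
    (hcont.locallyIntegrable.locallyIntegrableOn _) one_pos hy
    (by simpa using hcont.continuousWithinAt (x := 0) |>.tendsto) tendsto_exp_neg_atTop_nhds_zero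
    (by simpa [div_eq_inv_mul] using hint)
  simpa [div_eq_inv_mul] using h

noncomputable def malmstenIntegral (x : ℝ) : ℝ :=
  ∫ u in Ioi 0, malmstenIntegrand x u

lemma malmstenIntegral_one : malmstenIntegral 1 = 0 := by
  simp [malmstenIntegral, malmstenIntegrand]

lemma malmstenIntegral_add_one {y : ℝ} (hy : 0 < y) :
    malmstenIntegral (y + 1) = malmstenIntegral y + log y := by
  have hstep : EqOn (malmstenIntegrand (y + 1))
      (fun u => malmstenIntegrand y u + (exp (-u) - exp (-(y * u))) / u) (Ioi 0) :=
    fun u hu => malmstenIntegrand_add_one y hu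
  have hfrullani : IntegrableOn (fun u => (exp (-u) - exp (-(y * u))) / u) (Ioi 0) :=
    ((integrableOn_malmstenIntegrand (by linarith : 0 < y + 1)).sub
      (integrableOn_malmstenIntegrand hy)).congr_fun
      (fun u hu => by simp [malmstenIntegrand_add_one y hu]) measurableSet_Ioi
  rw [malmstenIntegral, setIntegral_congr_fun measurableSet_Ioi hstep,
    integral_add (integrableOn_malmstenIntegrand hy) hfrullani,
    integral_exp_neg_sub_exp_neg_mul_div hy hfrullani, malmstenIntegral]

lemma convexOn_malmstenIntegral : ConvexOn ℝ (Ioi 0) malmstenIntegral :=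
  convexOn_integral (convex_Ioi 0) (fun _ hx => integrableOn_malmstenIntegrand hx)
    ((ae_restrict_iff' measurableSet_Ioi).mpr (ae_of_all _ fun _ hu =>
      (convexOn_malmstenIntegrand_left hu).subset (subset_univ _) (convex_Ioi 0)))

theorem malmsten_formula (x : ℝ) (hx : 0 < x) :
    Real.log (Real.Gamma x) =
      ∫ u in Set.Ioi (0 : ℝ),
        (Real.exp (-u) / u) *
          ((x - 1) - (1 - Real.exp (-(x - 1) * u)) / (1 - Real.exp (-u))) := by
  have h := tendsto_nhds_unique (BohrMollerup.tendsto_log_gamma hx)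
    (BohrMollerup.tendsto_logGammaSeq convexOn_malmstenIntegral malmstenIntegral_add_one hx)
  rwa [malmstenIntegral_one, sub_zero] at h
end

section
/- Duplication formula for the double gamma function: for every real x > 0, G(2x) = G(1/2)^{−2} · 2^{(x−1)(2x−1)} · π^{−x} · Γ(x) · G(x)² · G(x + 1/2)². -/
/-!
Writing `doubleGamma x = exp (logDoubleGamma x)`, with `logDoubleGamma x` a quadratic in `x` plus
`∑ₙ f (x - 1) n` for the logarithms `f t n` of the Weierstrass factors, the claim becomes an
identity of series. Pair the terms `2n`, `2n + 1` of the series for `2x` with the `n`-th terms of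
the others: the terms of order `n` cancel, leaving
`log (n + 1/2) - log (n + x) + (x - 1/2)² / (n + 1/2) - (x - 1/2) (x - 3/2) / (n + 1)`,
whose partial sums are evaluated by Euler's limit formula for `Γ` at `x` and at `1/2`
(`Γ (1/2) = √π`) and by `Hₙ - log n → γ`.
-/

open Real

open Filter Finset Topology
open scoped Nat

lemma abs_log_one_add_sub_add_sq_div_two_le {a : ℝ} (ha : |a| ≤ 1 / 2) :
    |log (1 + a) - a + a ^ 2 / 2| ≤ 2 * |a| ^ 3 := by
  have h := abs_log_sub_add_sum_range_le (x := -a) (by rw [abs_neg]; linarith) 2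
  norm_num [sum_range_succ] at h
  calc |log (1 + a) - a + a ^ 2 / 2| = |-a + a ^ 2 / 2 + log (1 + a)| := by ring_nf
    _ ≤ |a| ^ 3 / (1 - |a|) := h
    _ ≤ 2 * |a| ^ 3 := by
        rw [div_le_iff₀ (by linarith)]
        nlinarith [mul_le_mul_of_nonneg_left ha (pow_nonneg (abs_nonneg a) 3)]

lemma Summable.hasSum_even_add_odd {E : Type*} [AddCommGroup E] [UniformSpace E]
    [IsUniformAddGroup E] [CompleteSpace E] [T2Space E] {f : ℕ → E} (hf : Summable f) :
    HasSum (fun n => f (2 * n) + f (2 * n + 1)) (∑' n, f n) := by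
  have hdouble : Function.Injective (2 * · : ℕ → ℕ) := mul_right_injective₀ two_ne_zero
  have h₀ := hf.comp_injective hdouble
  have h₁ := hf.comp_injective ((add_left_injective 1).comp hdouble)
  rw [← tsum_even_add_odd h₀ h₁]
  exact h₀.hasSum.add h₁.hasSum

lemma tendsto_sum_range_log_add_sub {y : ℝ} (hy : 0 < y) :
    Tendsto (fun N : ℕ => ∑ n ∈ range N, log (n + y) - (y - 1) * log N - log N !) atTop
      (𝓝 (-log (Gamma y))) := by
  have h := (BohrMollerup.tendsto_log_gamma hy).neg.sub
    ((tendsto_log_comp_add_sub_log y).comp tendsto_natCast_atTop_atTop)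
  rw [sub_zero] at h
  refine h.congr fun N => ?_
  simp only [BohrMollerup.logGammaSeq, Function.comp_apply, sum_range_succ, add_comm y]
  ring

lemma tendsto_sum_range_inv_add_one_sub_log :
    Tendsto (fun N : ℕ => ∑ n ∈ range N, ((n : ℝ) + 1)⁻¹ - log N) atTop
      (𝓝 eulerMascheroniConstant) := by
  refine tendsto_harmonic_sub_log.congr fun N => ?_
  simp [harmonic]

lemma sum_range_inv_add_half (N : ℕ) :
    ∑ n ∈ range N, ((n : ℝ) + 1 / 2)⁻¹
      = 2 * ∑ m ∈ range (2 * N), ((m : ℝ) + 1)⁻¹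
        - ∑ n ∈ range N, ((n : ℝ) + 1)⁻¹ := by
  induction N with
  | zero => simp
  | succ N ih =>
    rw [show 2 * (N + 1) = 2 * N + 1 + 1 by ring]
    simp only [sum_range_succ, ih]
    push_cast
    field_simp
    ring

lemma tendsto_sum_range_inv_add_half_sub_log :
    Tendsto (fun N : ℕ => ∑ n ∈ range N, ((n : ℝ) + 1 / 2)⁻¹ - log N) atTop
      (𝓝 (eulerMascheroniConstant + 2 * log 2)) := by
  have hH := tendsto_sum_range_inv_add_one_sub_log
  have hH₂ := hH.comp (tendsto_id.const_mul_atTop' two_pos)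
  have h := ((hH₂.const_mul 2).sub hH).add_const (2 * log 2)
  rw [show 2 * eulerMascheroniConstant - eulerMascheroniConstant = eulerMascheroniConstant by
    ring] at h
  refine h.congr' ?_
  filter_upwards [eventually_ne_atTop 0] with N hN
  rw [sum_range_inv_add_half, Function.comp_apply, id, Nat.cast_mul, Nat.cast_ofNat,
    log_mul two_ne_zero (by exact_mod_cast hN)]
  ring

noncomputable def logDoubleGammaFactor (t : ℝ) (n : ℕ) : ℝ :=
  (n + 1) * log (1 + t / (n + 1)) - t + t ^ 2 / (2 * (n + 1))

lemma summable_logDoubleGammaFactor (t : ℝ) : Summable (logDoubleGammaFactor t) := by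
  have hbound : Summable fun n : ℕ => 2 * |t| ^ 3 / ((n : ℝ) + 1) ^ 2 := by
    simpa [div_eq_mul_inv] using
      ((summable_one_div_nat_add_rpow 1 2).mpr one_lt_two).mul_left (2 * |t| ^ 3)
  refine Summable.of_norm_bounded_eventually_nat hbound ?_
  filter_upwards [eventually_ge_atTop ⌈2 * |t|⌉₊] with n hn
  have hn₀ : (0 : ℝ) < n + 1 := by positivity
  have ha : |t / (n + 1)| ≤ 1 / 2 := by
    rw [abs_div, abs_of_pos hn₀, div_le_iff₀ hn₀]
    linarith [Nat.ceil_le.mp hn]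
  have hfactor : logDoubleGammaFactor t n
      = (n + 1) * (log (1 + t / (n + 1)) - t / (n + 1) + (t / (n + 1)) ^ 2 / 2) := by
    rw [logDoubleGammaFactor]; field_simp
  calc ‖logDoubleGammaFactor t n‖
      = (n + 1) * |log (1 + t / (n + 1)) - t / (n + 1) + (t / (n + 1)) ^ 2 / 2| := by
        rw [hfactor, Real.norm_eq_abs, abs_mul, abs_of_pos hn₀]
    _ ≤ (n + 1) * (2 * |t / (n + 1)| ^ 3) := by
        gcongr; exact abs_log_one_add_sub_add_sq_div_two_le ha
    _ = 2 * |t| ^ 3 / ((n : ℝ) + 1) ^ 2 := by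
        rw [abs_div, abs_of_pos hn₀]; field_simp

lemma hasProd_doubleGammaFactor {t : ℝ} (ht : -1 < t) :
    HasProd (fun n : ℕ => (1 + t / (n + 1)) ^ (n + 1) * exp (-t + t ^ 2 / (2 * (n + 1))))
      (exp (∑' n, logDoubleGammaFactor t n)) := by
  refine (summable_logDoubleGammaFactor t).hasSum.rexp.congr_fun fun n => ?_
  have hpos : 0 < 1 + t / (n + 1) := by
    rw [one_add_div (by positivity)]
    exact div_pos (by linarith [n.cast_nonneg (α := ℝ)]) (by positivity)
  calc (1 + t / (n + 1)) ^ (n + 1) * exp (-t + t ^ 2 / (2 * (n + 1)))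
      = exp (((n + 1 : ℕ) : ℝ) * log (1 + t / (n + 1))) * exp (-t + t ^ 2 / (2 * (n + 1))) := by
        rw [exp_nat_mul, exp_log hpos]
    _ = exp (logDoubleGammaFactor t n) := by
        rw [← exp_add, logDoubleGammaFactor]; push_cast; ring_nf

noncomputable def logDoubleGamma (x : ℝ) : ℝ :=
  (x - 1) / 2 * log (2 * π) - (x - 1) * x / 2 - eulerMascheroniConstant * (x - 1) ^ 2 / 2 +
    ∑' n, logDoubleGammaFactor (x - 1) n

lemma doubleGamma_eq_exp_logDoubleGamma {x : ℝ} (hx : 0 < x) :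
    doubleGamma x = exp (logDoubleGamma x) := by
  rw [doubleGamma, (hasProd_doubleGammaFactor (by linarith : -1 < x - 1)).tprod_eq,
    rpow_def_of_pos (by positivity), ← exp_add, ← exp_add, logDoubleGamma]
  ring_nf

lemma logDoubleGammaFactor_eq_sub_log {t : ℝ} (ht : -1 < t) (n : ℕ) :
    logDoubleGammaFactor t n
      = (n + 1) * (log (n + 1 + t) - log (n + 1)) - t + t ^ 2 / (2 * (n + 1)) := by
  rw [logDoubleGammaFactor, one_add_div (by positivity),
    log_div (by linarith [n.cast_nonneg (α := ℝ)]) (by positivity)]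

lemma logDoubleGammaFactor_duplication {x : ℝ} (hx : 0 < x) (n : ℕ) :
    logDoubleGammaFactor (2 * x - 1) (2 * n) + logDoubleGammaFactor (2 * x - 1) (2 * n + 1)
      - 2 * logDoubleGammaFactor (x - 1) n - 2 * logDoubleGammaFactor (x - 1 / 2) n
      + 2 * logDoubleGammaFactor (-(1 / 2)) n
    = log (n + 1 / 2) - log (n + x) + (x - 1 / 2) ^ 2 / (n + 1 / 2)
      - (x - 1 / 2) * (x - 3 / 2) / (n + 1) := by
  have hn := n.cast_nonneg (α := ℝ)
  have log_two_mul {y z : ℝ} (hy : 0 < y) (h : z = 2 * y) : log z = log 2 + log y := by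
    rw [h, log_mul two_ne_zero hy.ne']
  have e₁ : log (2 * n + 1 + 1 + (2 * x - 1)) = log 2 + log (n + 1 + (x - 1 / 2)) :=
    log_two_mul (by linarith) (by ring)
  have e₂ : log (2 * n + 1 + 1) = log 2 + log (n + 1) := log_two_mul (by positivity) (by ring)
  have e₃ : log (2 * n + 1 + (2 * x - 1)) = log 2 + log (n + x) :=
    log_two_mul (by linarith) (by ring)
  have e₄ : log (2 * n + 1) = log 2 + log (n + 1 / 2) := log_two_mul (by positivity) (by ring)
  simp only [logDoubleGammaFactor_eq_sub_log (by linarith : -1 < 2 * x - 1),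
    logDoubleGammaFactor_eq_sub_log (by linarith : -1 < x - 1),
    logDoubleGammaFactor_eq_sub_log (by linarith : -1 < x - 1 / 2),
    logDoubleGammaFactor_eq_sub_log (by norm_num : (-1 : ℝ) < -(1 / 2))]
  push_cast
  rw [e₁, e₂, e₃, e₄, show (n : ℝ) + 1 + (x - 1) = n + x by ring,
    show (n : ℝ) + 1 + -(1 / 2) = n + 1 / 2 by ring]
  field_simp
  ring

lemma tendsto_sum_range_duplication {x : ℝ} (hx : 0 < x) :
    Tendsto (fun N : ℕ => ∑ n ∈ range N, (log (n + 1 / 2) - log (n + x)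
        + (x - 1 / 2) ^ 2 / (n + 1 / 2) - (x - 1 / 2) * (x - 3 / 2) / (n + 1))) atTop
      (𝓝 (log (Gamma x) - log π / 2 + (x - 1 / 2) * eulerMascheroniConstant
        + 2 * (x - 1 / 2) ^ 2 * log 2)) := by
  have hΓ := (tendsto_sum_range_log_add_sub one_half_pos).sub (tendsto_sum_range_log_add_sub hx)
  have h := (hΓ.add (tendsto_sum_range_inv_add_half_sub_log.const_mul ((x - 1 / 2) ^ 2))).sub
    (tendsto_sum_range_inv_add_one_sub_log.const_mul ((x - 1 / 2) * (x - 3 / 2)))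
  convert h using 2 with N
  · simp only [sum_add_distrib, sum_sub_distrib, div_eq_mul_inv, ← mul_sum]
    ring
  · rw [Gamma_one_half_eq, log_sqrt pi_pos.le]
    ring

lemma tsum_logDoubleGammaFactor_duplication {x : ℝ} (hx : 0 < x) :
    ∑' n, logDoubleGammaFactor (2 * x - 1) n - 2 * ∑' n, logDoubleGammaFactor (x - 1) n
      - 2 * ∑' n, logDoubleGammaFactor (x - 1 / 2) n
      + 2 * ∑' n, logDoubleGammaFactor (-(1 / 2)) n
    = log (Gamma x) - log π / 2 + (x - 1 / 2) * eulerMascheroniConstant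
        + 2 * (x - 1 / 2) ^ 2 * log 2 := by
  have hpairs := (summable_logDoubleGammaFactor (2 * x - 1)).hasSum_even_add_odd
  have hsum (t : ℝ) := (summable_logDoubleGammaFactor t).hasSum.mul_left 2
  have h := (((hpairs.sub (hsum (x - 1))).sub (hsum (x - 1 / 2))).add
    (hsum (-(1 / 2)))).tendsto_sum_nat
  simp only [logDoubleGammaFactor_duplication hx] at h
  exact tendsto_nhds_unique h (tendsto_sum_range_duplication hx)

lemma logDoubleGamma_duplication {x : ℝ} (hx : 0 < x) :
    logDoubleGamma (2 * x) = -2 * logDoubleGamma (1 / 2) + (x - 1) * (2 * x - 1) * log 2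
      - x * log π + log (Gamma x) + 2 * logDoubleGamma x + 2 * logDoubleGamma (x + 1 / 2) := by
  simp only [logDoubleGamma, show (1 : ℝ) / 2 - 1 = -(1 / 2) by norm_num,
    show x + 1 / 2 - 1 = x - 1 / 2 by ring, log_mul two_ne_zero pi_ne_zero]
  linear_combination tsum_logDoubleGammaFactor_duplication hx

theorem doubleGamma_duplication (x : ℝ) (hx : 0 < x) :
    doubleGamma (2 * x) =
      (doubleGamma (1 / 2)) ⁻¹ ^ 2 * 2 ^ ((x - 1) * (2 * x - 1)) * π ^ (-x) *
        Real.Gamma x * doubleGamma x ^ 2 * doubleGamma (x + 1 / 2) ^ 2 := by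
  rw [← exp_log (Gamma_pos_of_pos hx), doubleGamma_eq_exp_logDoubleGamma (by positivity),
    logDoubleGamma_duplication hx, doubleGamma_eq_exp_logDoubleGamma hx,
    doubleGamma_eq_exp_logDoubleGamma (by positivity),
    doubleGamma_eq_exp_logDoubleGamma (by positivity), rpow_def_of_pos two_pos,
    rpow_def_of_pos pi_pos]
  simp only [← exp_neg, ← exp_nat_mul, ← exp_add]
  congr 1
  push_cast
  ring
end

section
/- For every real x with 0 < x < 1, ∫_0^x π t · cot(πt) dt = x · ln(2π) + ln( G(1−x)/G(1+x) ). -/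
/-! Both sides equal `x + ∑ₘ (2x + m (log (m - x) - log (m + x)))`, summed over `m ≥ 1`.
On the left, integrate term by term the Mittag-Leffler expansion
`π t cot (π t) = 1 + ∑ₘ 2t² / (t² - m²)`, whose terms on `(0, x]` are dominated by their
values at `t = x`. On the right, take logarithms in the Weierstrass product: the powers of `2π`
and the quadratic exponentials leave `-x log (2π)` and `x`, and the difference of the `m`-th
logarithmic factors at `-x` and `x` is exactly the `m`-th term above. -/

open Real

open MeasureTheory Set
open scoped Interval

noncomputable def cotTermIntegral (m x : ℝ) : ℝ :=
  2 * x + m * (log (m - x) - log (m + x))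

theorem hasDerivAt_cotTermIntegral {m t : ℝ} (ht : |t| < m) :
    HasDerivAt (cotTermIntegral m) (2 * t ^ 2 / (t ^ 2 - m ^ 2)) t := by
  obtain ⟨hmt, htm⟩ := abs_lt.1 ht
  have hsub : 0 < m - t := by linarith
  have hadd : 0 < m + t := by linarith
  have hlog_sub := ((hasDerivAt_id t).const_sub m).log hsub.ne'
  have hlog_add := ((hasDerivAt_id t).const_add m).log hadd.ne'
  refine (((hasDerivAt_id t).const_mul 2).add
    ((hlog_sub.sub hlog_add).const_mul m)).congr_deriv ?_
  have : t ^ 2 - m ^ 2 ≠ 0 := by nlinarith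
  simp only [id]
  field_simp
  ring

theorem abs_le_abs_of_mem_uIcc_zero {t x : ℝ} (ht : t ∈ uIcc 0 x) : |t| ≤ |x| := by
  simpa using abs_sub_left_of_mem_uIcc ht

theorem integral_two_mul_sq_div_sq_sub_sq {m x : ℝ} (hx : |x| < m) :
    ∫ t in (0 : ℝ)..x, 2 * t ^ 2 / (t ^ 2 - m ^ 2) = cotTermIntegral m x := by
  have habs : ∀ t ∈ uIcc 0 x, |t| < m := fun t ht ↦
    (abs_le_abs_of_mem_uIcc_zero ht).trans_lt hx
  have hcont : ContinuousOn (fun t : ℝ ↦ 2 * t ^ 2 / (t ^ 2 - m ^ 2)) (uIcc 0 x) :=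
    (by fun_prop : Continuous fun t : ℝ ↦ 2 * t ^ 2).continuousOn.div (by fun_prop)
      fun t ht ↦ by have := habs t ht; nlinarith [abs_nonneg t, sq_abs t]
  rw [intervalIntegral.integral_eq_sub_of_hasDerivAt
    (fun t ht ↦ hasDerivAt_cotTermIntegral (habs t ht)) hcont.intervalIntegrable]
  simp [cotTermIntegral]

theorem hasSum_mul_cot {t : ℝ} (ht : ∀ n : ℤ, (n : ℝ) ≠ t) :
    HasSum (fun n : ℕ ↦ 2 * t ^ 2 / (t ^ 2 - (n + 1) ^ 2)) (π * t * cot (π * t) - 1) := by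
  have hz : (t : ℂ) ∈ Complex.integerComplement := by
    rintro ⟨n, hn⟩
    exact ht n (by exact_mod_cast hn)
  have ht0 : (t : ℂ) ≠ 0 := Complex.integerComplement.ne_zero hz
  have hterm (n : ℕ) :
      (t : ℂ) * cotTerm t n = ((2 * t ^ 2 / (t ^ 2 - (n + 1) ^ 2) : ℝ) : ℂ) := by
    have h1 : (t : ℂ) - (n + 1) ≠ 0 := by
      simpa [sub_eq_add_neg] using Complex.integerComplement_add_ne_zero hz (-((n : ℤ) + 1))
    have h2 : (t : ℂ) + (n + 1) ≠ 0 := by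
      simpa using Complex.integerComplement_add_ne_zero hz ((n : ℤ) + 1)
    have h3 : (t : ℂ) ^ 2 - (n + 1) ^ 2 ≠ 0 := by
      rw [sq_sub_sq]
      exact mul_ne_zero h2 h1
    push_cast
    field_simp
    ring
  have hsum :
      HasSum (fun n ↦ (t : ℂ) * cotTerm t n) (t * (π * Complex.cot (π * t) - 1 / t)) := by
    rw [cot_series_rep' hz]
    exact (summable_cotTerm hz).hasSum.mul_left _
  have hval :
      (t : ℂ) * (π * Complex.cot (π * t) - 1 / t) = ((π * t * cot (π * t) - 1 : ℝ) : ℂ) := by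
    push_cast
    field_simp
  rw [funext hterm, hval] at hsum
  exact Complex.hasSum_ofReal.mp hsum

theorem intCast_ne_of_mem_Ioo_zero_one {t : ℝ} (ht : t ∈ Ioo 0 1) (n : ℤ) : (n : ℝ) ≠ t := by
  rintro rfl
  have h0 : 0 < n := by exact_mod_cast ht.1
  have h1 : n < 1 := by exact_mod_cast ht.2
  omega

theorem abs_two_mul_sq_div_sq_sub_sq_le {m t x : ℝ} (htx : |t| ≤ |x|) (hxm : |x| < m) :
    |2 * t ^ 2 / (t ^ 2 - m ^ 2)| ≤ |2 * x ^ 2 / (x ^ 2 - m ^ 2)| := by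
  have htx2 : t ^ 2 ≤ x ^ 2 := sq_le_sq.2 htx
  have hxm2 : x ^ 2 < m ^ 2 := by nlinarith [abs_nonneg x, sq_abs x]
  rw [abs_div, abs_div, abs_of_neg (by linarith : t ^ 2 - m ^ 2 < 0),
    abs_of_neg (by linarith : x ^ 2 - m ^ 2 < 0), abs_of_nonneg (by positivity),
    abs_of_nonneg (by positivity)]
  exact div_le_div₀ (by positivity) (by linarith) (by linarith) (by linarith)

theorem intervalIntegrable_mul_cot {x : ℝ} (hx0 : 0 ≤ x) (hx1 : x < 1) :
    IntervalIntegrable (fun t ↦ π * t * cot (π * t)) volume 0 x := by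
  -- The junk value `cot 0 = 0` makes the integrand discontinuous at `0`; away from `0` it agrees
  -- with the continuous `cos (π t) / sinc (π t)`.
  have hsin (t : ℝ) (ht0 : 0 < t) (ht1 : t < 1) : 0 < sin (π * t) :=
    sin_pos_of_pos_of_lt_pi (by positivity) (by nlinarith [pi_pos])
  have hsinc : ∀ t ∈ uIcc 0 x, sinc (π * t) ≠ 0 := by
    intro t ht
    rw [uIcc_of_le hx0] at ht
    rcases ht.1.eq_or_lt with rfl | ht0
    · simp
    · rw [sinc_of_ne_zero (by positivity)]
      exact (div_pos (hsin t ht0 (ht.2.trans_lt hx1)) (by positivity)).ne'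
  have hcont : ContinuousOn (fun t ↦ cos (π * t) / sinc (π * t)) (uIcc 0 x) :=
    (by fun_prop : Continuous fun t ↦ cos (π * t)).continuousOn.div
      (continuous_sinc.comp (continuous_const.mul continuous_id)).continuousOn hsinc
  refine hcont.intervalIntegrable.congr_uIoo fun t ht ↦ ?_
  rw [uIoo_of_le hx0] at ht
  have hsin_t := hsin t ht.1 (ht.2.trans hx1)
  have ht0 : t ≠ 0 := ht.1.ne'
  simp only
  rw [sinc_of_ne_zero (by positivity), cot_eq_cos_div_sin]
  field_simp

theorem integral_mul_cot {x : ℝ} (hx0 : 0 < x) (hx1 : x < 1) :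
    ∫ t in (0 : ℝ)..x, π * t * cot (π * t) = x + ∑' n : ℕ, cotTermIntegral (n + 1) x := by
  have hm (n : ℕ) : |x| < n + 1 := by rw [abs_of_pos hx0]; linarith [n.cast_nonneg (α := ℝ)]
  have hseries : ∀ t ∈ Ι 0 x, HasSum (fun n : ℕ ↦ 2 * t ^ 2 / (t ^ 2 - (n + 1) ^ 2))
      (π * t * cot (π * t) - 1) := by
    rw [uIoc_of_le hx0.le]
    exact fun t ht ↦ hasSum_mul_cot (intCast_ne_of_mem_Ioo_zero_one ⟨ht.1, ht.2.trans_lt hx1⟩)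
  have htermwise := intervalIntegral.hasSum_integral_of_dominated_convergence (μ := volume)
    (fun (n : ℕ) _ ↦ |2 * x ^ 2 / (x ^ 2 - ((n : ℝ) + 1) ^ 2)|)
    (fun n ↦ (by fun_prop : Measurable fun t : ℝ ↦
      2 * t ^ 2 / (t ^ 2 - ((n : ℝ) + 1) ^ 2)).aestronglyMeasurable)
    (fun n ↦ ae_of_all _ fun t ht ↦ abs_two_mul_sq_div_sq_sub_sq_le
      (abs_le_abs_of_mem_uIcc_zero (uIoc_subset_uIcc ht)) (hm n))
    (ae_of_all _ fun _ _ ↦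
      (hasSum_mul_cot (intCast_ne_of_mem_Ioo_zero_one ⟨hx0, hx1⟩)).summable.abs)
    intervalIntegrable_const (ae_of_all _ hseries)
  have hsub := intervalIntegral.integral_sub (intervalIntegrable_mul_cot hx0.le hx1)
    (intervalIntegrable_const (c := (1 : ℝ)))
  simp only [intervalIntegral.integral_const, sub_zero, smul_eq_mul, mul_one] at hsub
  simp only [integral_two_mul_sq_div_sq_sub_sq (hm _)] at htermwise
  rw [htermwise.tsum_eq, hsub]
  ring

theorem abs_log_one_add_sub_add_sq_le {u : ℝ} (hu : |u| < 1) :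
    |log (1 + u) - u + u ^ 2 / 2| ≤ |u| ^ 3 / (1 - |u|) := by
  have h := abs_log_sub_add_sum_range_le (x := -u) (by rwa [abs_neg]) 2
  simp only [Finset.sum_range_succ, Finset.sum_range_zero, sub_neg_eq_add, abs_neg] at h
  convert h using 2
  ring

theorem abs_div_natCast_add_one_le (y : ℝ) (n : ℕ) : |y / (n + 1)| ≤ |y| := by
  rw [abs_div, abs_of_pos (by positivity : (0 : ℝ) < n + 1)]
  exact div_le_self (abs_nonneg y) (by simp)

noncomputable def doubleGammaLogFactor (y : ℝ) (n : ℕ) : ℝ :=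
  (n + 1) * log (1 + y / (n + 1)) - y + y ^ 2 / (2 * (n + 1))

theorem abs_doubleGammaLogFactor_le {y : ℝ} (hy : |y| < 1) (n : ℕ) :
    |doubleGammaLogFactor y n| ≤ |y| ^ 3 / (1 - |y|) / (n + 1) ^ 2 := by
  set m : ℝ := n + 1
  have hm : 1 ≤ m := by simp [m]
  have hm0 : 0 < m := by linarith
  have hu : |y / m| ≤ |y| := abs_div_natCast_add_one_le y n
  have hfactor : doubleGammaLogFactor y n = m * (log (1 + y / m) - y / m + (y / m) ^ 2 / 2) := by
    rw [doubleGammaLogFactor]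
    field_simp
    ring
  calc |doubleGammaLogFactor y n|
      ≤ m * (|y / m| ^ 3 / (1 - |y / m|)) := by
        rw [hfactor, abs_mul, abs_of_pos hm0]
        exact mul_le_mul_of_nonneg_left (abs_log_one_add_sub_add_sq_le (hu.trans_lt hy)) hm0.le
    _ ≤ m * (|y| ^ 3 / m ^ 3 / (1 - |y|)) := by
        rw [abs_div, abs_of_pos hm0, div_pow]
        gcongr
        exact div_le_self (abs_nonneg y) hm
    _ = |y| ^ 3 / (1 - |y|) / m ^ 2 := by
        field_simp

theorem summable_doubleGammaLogFactor {y : ℝ} (hy : |y| < 1) :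
    Summable (doubleGammaLogFactor y) := by
  refine Summable.of_norm_bounded ?_ (abs_doubleGammaLogFactor_le hy)
  simp_rw [div_eq_mul_inv _ ((_ : ℝ) ^ 2)]
  refine Summable.mul_left _ ?_
  exact_mod_cast (summable_nat_add_iff 1).2 (Real.summable_nat_pow_inv.2 one_lt_two)

theorem exp_doubleGammaLogFactor {y : ℝ} (hy : |y| < 1) (n : ℕ) :
    exp (doubleGammaLogFactor y n) =
      (1 + y / (n + 1)) ^ (n + 1) * exp (-y + y ^ 2 / (2 * (n + 1))) := by
  have hpos : 0 < 1 + y / (n + 1) := by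
    linarith [neg_abs_le (y / (n + 1)), abs_div_natCast_add_one_le y n]
  rw [← exp_log (pow_pos hpos (n + 1)), ← exp_add, log_pow, doubleGammaLogFactor]
  push_cast
  ring_nf

theorem doubleGamma_one_add {y : ℝ} (hy : |y| < 1) :
    doubleGamma (1 + y) =
      exp (y / 2 * log (2 * π) - y * (1 + y) / 2 - eulerMascheroniConstant * y ^ 2 / 2 +
        ∑' n, doubleGammaLogFactor y n) := by
  have hprod := (summable_doubleGammaLogFactor hy).hasSum.rexp
  simp only [Function.comp_def, exp_doubleGammaLogFactor hy] at hprod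
  rw [doubleGamma, add_sub_cancel_left, hprod.tprod_eq, rpow_def_of_pos (by positivity),
    ← exp_add, ← exp_add]
  ring_nf

theorem doubleGammaLogFactor_neg_sub {x : ℝ} {n : ℕ} (hx : |x| < n + 1) :
    doubleGammaLogFactor (-x) n - doubleGammaLogFactor x n = cotTermIntegral (n + 1) x := by
  obtain ⟨hlt, hgt⟩ := abs_lt.1 hx
  have hsub : 1 + -x / (n + 1) = (n + 1 - x) / (n + 1) := by field_simp; ring
  have hadd : 1 + x / (n + 1) = (n + 1 + x) / (n + 1) := by field_simp
  rw [doubleGammaLogFactor, doubleGammaLogFactor, cotTermIntegral, hsub, hadd,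
    log_div (by linarith) (by positivity), log_div (by linarith) (by positivity)]
  ring

theorem log_doubleGamma_one_sub_div_one_add {x : ℝ} (hx : |x| < 1) :
    log (doubleGamma (1 - x) / doubleGamma (1 + x)) =
      -x * log (2 * π) + x + ∑' n : ℕ, cotTermIntegral (n + 1) x := by
  have hx' : |-x| < 1 := by rwa [abs_neg]
  have hm (n : ℕ) : |x| < n + 1 := by linarith [n.cast_nonneg (α := ℝ)]
  rw [sub_eq_add_neg, doubleGamma_one_add hx', doubleGamma_one_add hx, ← exp_sub, log_exp,
    ← tsum_congr fun n ↦ doubleGammaLogFactor_neg_sub (hm n),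
    (summable_doubleGammaLogFactor hx').tsum_sub (summable_doubleGammaLogFactor hx)]
  ring

theorem integral_cot_eq (x : ℝ) (hx0 : 0 < x) (hx1 : x < 1) :
    ∫ t in (0 : ℝ)..x, π * t * Real.cot (π * t) =
      x * Real.log (2 * π) +
        Real.log (doubleGamma (1 - x) / doubleGamma (1 + x)) := by
  rw [integral_mul_cot hx0 hx1, log_doubleGamma_one_sub_div_one_add (by rwa [abs_of_pos hx0])]
  ring
end

section
/- The logarithmic derivative of the double gamma function: for every real x > 0, the function x ↦ ln G(x) is differentiable at x and its derivative φ(x) satisfies φ(x) = (x−1)·(ψ(x) − 1) + (ln(2π) − 1)/2, where ψ = Γ'/Γ is the digamma function. In particular φ(1) = (ln(2π) − 1)/2. -/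
open Real

/-- The digamma function `ψ = Γ'/Γ`. -/
noncomputable def digamma (x : ℝ) : ℝ := deriv Real.Gamma x / Real.Gamma x

/-!
Taking logarithms, `log G(x)` is an explicit quadratic polynomial plus the series
`∑ₙ L_n(x)` of logarithms of the Weierstrass factors, and
`L_n'(x) = (x - 1) (1/(n+1) - 1/(n+x))`. These derivatives are bounded by `C/(n+1)²` locally
uniformly, so the series may be differentiated termwise, and it remains to identify
`∑ₙ (1/(n+1) - 1/(n+x))` with `ψ(x) + γ`. Both `ψ = (log Γ)'` (by the Bohr–Mollerup convexity
of `log Γ`) and this series are monotone on `(0, ∞)`, satisfy `f(x+1) = f(x) + 1/x` and agree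
at `1`; such a function is unique, because the `1`-periodic difference is squeezed to `0` on
the intervals `[k, k+1]` as `k → ∞`.
-/

open Real Filter Topology Set

local notation "γ" => eulerMascheroniConstant

lemma eqOn_Ioi_of_monotoneOn_of_add_one {f g : ℝ → ℝ} (hf : MonotoneOn f (Ioi 0))
    (hg : MonotoneOn g (Ioi 0)) (hf_succ : ∀ x, 0 < x → f (x + 1) = f x + 1 / x)
    (hg_succ : ∀ x, 0 < x → g (x + 1) = g x + 1 / x) (h_one : f 1 = g 1) :
    EqOn f g (Ioi 0) := by
  have h_nat (k : ℕ) : f (k + 1) = g (k + 1) := by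
    induction k with
    | zero => simpa using h_one
    | succ k ih =>
      push_cast
      rw [hf_succ _ (by positivity), hg_succ _ (by positivity), ih]
  have h_close (k : ℕ) (z : ℝ) (hkz : (k : ℝ) + 1 ≤ z) (hzk : z ≤ (k : ℝ) + 1 + 1) :
      |f z - g z| ≤ 1 / ((k : ℝ) + 1) := by
    have hk : (0 : ℝ) < k + 1 := by positivity
    have hz : 0 < z := hk.trans_le hkz
    have f_lo := hf hk hz hkz
    have f_hi := (hf hz (mem_Ioi.2 (by positivity)) hzk).trans_eq (hf_succ _ hk)
    have g_lo := hg hk hz hkz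
    have g_hi := (hg hz (mem_Ioi.2 (by positivity)) hzk).trans_eq (hg_succ _ hk)
    rw [h_nat k] at f_lo f_hi
    rw [abs_le]
    constructor <;> linarith
  have h_periodic (x : ℝ) (hx : 0 < x) (n : ℕ) : f (x + n) - g (x + n) = f x - g x := by
    induction n with
    | zero => simp
    | succ n ih =>
      push_cast
      rw [← add_assoc, hf_succ _ (by positivity), hg_succ _ (by positivity), ← ih]
      ring
  intro x hx
  have h_bound (n : ℕ) : |f x - g x| ≤ 1 / ((n : ℝ) + 1) := by
    have h_floor : (⌊x⌋₊ : ℝ) ≤ x := Nat.floor_le (le_of_lt hx)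
    have h_ceil : x ≤ ⌊x⌋₊ + 1 := (Nat.lt_floor_add_one x).le
    rw [← h_periodic x hx (n + 1)]
    refine (h_close (⌊x⌋₊ + n) _ (by push_cast; linarith) (by push_cast; linarith)).trans ?_
    gcongr
    linarith
  have := ge_of_tendsto' tendsto_one_div_add_atTop_nhds_zero_nat h_bound
  exact sub_eq_zero.mp (abs_nonpos_iff.mp this)

lemma differentiableAt_Gamma_of_pos {x : ℝ} (hx : 0 < x) : DifferentiableAt ℝ Gamma x :=
  differentiableAt_Gamma fun m => ((neg_nonpos.mpr m.cast_nonneg).trans_lt hx).ne'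

lemma differentiableAt_log_Gamma {x : ℝ} (hx : 0 < x) : DifferentiableAt ℝ (log ∘ Gamma) x :=
  (differentiableAt_Gamma_of_pos hx).log (Gamma_pos_of_pos hx).ne'

lemma deriv_log_Gamma_eq_digamma {x : ℝ} (hx : 0 < x) : deriv (log ∘ Gamma) x = digamma x := by
  rw [Function.comp_def, deriv.log (differentiableAt_Gamma_of_pos hx) (Gamma_pos_of_pos hx).ne',
    digamma]

lemma deriv_log_Gamma_one : deriv (log ∘ Gamma) 1 = -γ := by
  rw [deriv_log_Gamma_eq_digamma one_pos, digamma, hasDerivAt_Gamma_one.deriv, Gamma_one, div_one]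

lemma deriv_log_Gamma_add_one {x : ℝ} (hx : 0 < x) :
    deriv (log ∘ Gamma) (x + 1) = deriv (log ∘ Gamma) x + 1 / x := by
  rw [← deriv_comp_add_const, one_div, ← deriv_log,
    ← deriv_add (differentiableAt_log_Gamma hx) (differentiableAt_log hx.ne')]
  apply EventuallyEq.deriv_eq
  filter_upwards [eventually_gt_nhds hx] with t ht
  simp only [Function.comp_apply, Pi.add_apply, Gamma_add_one ht.ne',
    log_mul ht.ne' (Gamma_pos_of_pos ht).ne', add_comm]

lemma monotoneOn_deriv_log_Gamma : MonotoneOn (deriv (log ∘ Gamma)) (Ioi 0) :=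
  convexOn_log_Gamma.monotoneOn_deriv fun _ hx => differentiableAt_log_Gamma hx

lemma summable_one_div_add_one_sq : Summable fun n : ℕ => 1 / ((n : ℝ) + 1) ^ 2 := by
  have := (summable_nat_add_iff 1).mpr (summable_one_div_nat_pow.mpr one_lt_two)
  exact this.congr fun n => by push_cast; rfl

lemma Antitone.hasSum_sub_succ {f : ℕ → ℝ} {l : ℝ} (hf : Antitone f)
    (hl : Tendsto f atTop (𝓝 l)) : HasSum (fun n => f n - f (n + 1)) (f 0 - l) := by
  rw [hasSum_iff_tendsto_nat_of_nonneg fun n => sub_nonneg.mpr (hf n.le_succ)]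
  simp_rw [Finset.sum_range_sub']
  exact tendsto_const_nhds.sub hl

lemma abs_one_div_add_one_sub_one_div_add_le {a y : ℝ} (ha : 0 < a) (ha_one : a ≤ 1)
    (hay : a ≤ y) (n : ℕ) :
    |1 / ((n : ℝ) + 1) - 1 / (n + y)| ≤ |y - 1| / a * (1 / ((n : ℝ) + 1) ^ 2) := by
  have hn : (0 : ℝ) < n + 1 := by positivity
  have hny : (0 : ℝ) < n + y := by linarith [n.cast_nonneg (α := ℝ)]
  have h_den : a * ((n : ℝ) + 1) ^ 2 ≤ ((n : ℝ) + 1) * (n + y) := by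
    nlinarith [mul_le_mul_of_nonneg_left ha_one (n.cast_nonneg (α := ℝ))]
  calc |1 / ((n : ℝ) + 1) - 1 / (n + y)| = |y - 1| / (((n : ℝ) + 1) * (n + y)) := by
        rw [div_sub_div _ _ hn.ne' hny.ne', abs_div, abs_of_pos (mul_pos hn hny)]
        congr 2
        ring
    _ ≤ |y - 1| / (a * ((n : ℝ) + 1) ^ 2) := by gcongr
    _ = |y - 1| / a * (1 / ((n : ℝ) + 1) ^ 2) := by rw [div_mul_div_comm, mul_one]

noncomputable def digammaSeries (x : ℝ) : ℝ := ∑' n : ℕ, (1 / ((n : ℝ) + 1) - 1 / (n + x))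

lemma summable_digammaSeries {x : ℝ} (hx : 0 < x) :
    Summable fun n : ℕ => 1 / ((n : ℝ) + 1) - 1 / (n + x) :=
  .of_norm_bounded (summable_one_div_add_one_sq.mul_left _) fun n =>
    abs_one_div_add_one_sub_one_div_add_le (lt_min hx one_pos) (min_le_right _ _)
      (min_le_left _ _) n

lemma digammaSeries_one : digammaSeries 1 = 0 := by
  simp [digammaSeries]

lemma digammaSeries_add_one {x : ℝ} (hx : 0 < x) :
    digammaSeries (x + 1) = digammaSeries x + 1 / x := by
  have h_tel : HasSum (fun n : ℕ => 1 / ((n : ℝ) + x) - 1 / (((n + 1 : ℕ) : ℝ) + x)) (1 / x) := by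
    have h := Antitone.hasSum_sub_succ (f := fun n : ℕ => 1 / ((n : ℝ) + x)) (l := 0)
      (fun m n hmn => one_div_le_one_div_of_le (add_pos_of_nonneg_of_pos m.cast_nonneg hx)
        (by gcongr))
      (by simp only [one_div]; exact (tendsto_atTop_add_const_right atTop x
        tendsto_natCast_atTop_atTop).inv_tendsto_atTop)
    simpa using h
  unfold digammaSeries
  rw [← ((summable_digammaSeries hx).hasSum.add h_tel).tsum_eq]
  congr 1
  ext n
  push_cast
  ring

lemma monotoneOn_digammaSeries : MonotoneOn digammaSeries (Ioi 0) := by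
  intro x hx y hy hxy
  refine (summable_digammaSeries hx).tsum_le_tsum (fun n => ?_) (summable_digammaSeries hy)
  have : 1 / ((n : ℝ) + y) ≤ 1 / (n + x) := by
    gcongr
    exact add_pos_of_nonneg_of_pos n.cast_nonneg hx
  linarith

lemma digamma_eq_neg_eulerMascheroniConstant_add_digammaSeries {x : ℝ} (hx : 0 < x) :
    digamma x = -γ + digammaSeries x := by
  rw [← deriv_log_Gamma_eq_digamma hx]
  refine eqOn_Ioi_of_monotoneOn_of_add_one monotoneOn_deriv_log_Gamma
    (monotoneOn_digammaSeries.const_add _) (fun _ => deriv_log_Gamma_add_one)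
    (fun y hy => by rw [digammaSeries_add_one hy]; ring)
    (by rw [deriv_log_Gamma_one, digammaSeries_one, add_zero]) hx

noncomputable def logWeierstrassFactor (n : ℕ) (y : ℝ) : ℝ :=
  (n + 1) * log (1 + (y - 1) / (n + 1)) + (-(y - 1) + (y - 1) ^ 2 / (2 * (n + 1)))

lemma one_add_sub_one_div_eq (n : ℕ) (y : ℝ) :
    1 + (y - 1) / ((n : ℝ) + 1) = (n + y) / (n + 1) := by
  field_simp
  ring

lemma exp_logWeierstrassFactor {y : ℝ} (hy : 0 < y) (n : ℕ) :
    exp (logWeierstrassFactor n y) =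
      (1 + (y - 1) / (n + 1)) ^ (n + 1) * exp (-(y - 1) + (y - 1) ^ 2 / (2 * (n + 1))) := by
  have h_base : 0 < 1 + (y - 1) / ((n : ℝ) + 1) := by
    rw [one_add_sub_one_div_eq]
    positivity
  rw [logWeierstrassFactor, exp_add, ← exp_log (pow_pos h_base (n + 1)), log_pow]
  push_cast
  rfl

lemma hasDerivAt_logWeierstrassFactor (n : ℕ) {y : ℝ} (hy : 0 < y) :
    HasDerivAt (logWeierstrassFactor n) ((y - 1) * (1 / ((n : ℝ) + 1) - 1 / (n + y))) y := by
  have hn : (n : ℝ) + 1 ≠ 0 := by positivity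
  have hny : (n : ℝ) + y ≠ 0 := by positivity
  have h_sub := (hasDerivAt_id y).sub_const 1
  have h_base : HasDerivAt (fun z => 1 + (z - 1) / ((n : ℝ) + 1)) (1 / ((n : ℝ) + 1)) y :=
    (h_sub.div_const _).const_add 1
  have h_base_ne : 1 + (y - 1) / ((n : ℝ) + 1) ≠ 0 := by
    rw [one_add_sub_one_div_eq]
    positivity
  refine (((h_base.log h_base_ne).const_mul ((n : ℝ) + 1)).add
    (h_sub.neg.add ((h_sub.pow 2).div_const (2 * ((n : ℝ) + 1))))).congr_deriv ?_
  rw [one_add_sub_one_div_eq, id]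
  field_simp
  ring

lemma norm_deriv_logWeierstrassFactor_le {a b y : ℝ} (ha : 0 < a) (ha_one : a ≤ 1)
    (hy : y ∈ Ioo a b) (n : ℕ) :
    ‖(y - 1) * (1 / ((n : ℝ) + 1) - 1 / (n + y))‖ ≤ (b + 1) ^ 2 / a * (1 / ((n : ℝ) + 1) ^ 2) := by
  have hb : 0 < b + 1 := by linarith [hy.1, hy.2]
  have hy_sub : |y - 1| ≤ b + 1 := abs_le.mpr ⟨by linarith [hy.1, hy.2], by linarith [hy.2]⟩
  rw [norm_mul, norm_eq_abs, norm_eq_abs]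
  calc |y - 1| * |1 / ((n : ℝ) + 1) - 1 / (n + y)|
      ≤ (b + 1) * ((b + 1) / a * (1 / ((n : ℝ) + 1) ^ 2)) := by
        refine mul_le_mul hy_sub ?_ (abs_nonneg _) hb.le
        exact (abs_one_div_add_one_sub_one_div_add_le ha ha_one hy.1.le n).trans (by gcongr)
    _ = (b + 1) ^ 2 / a * (1 / ((n : ℝ) + 1) ^ 2) := by ring

lemma log_doubleGamma_eq {y : ℝ} (hy : 0 < y) (hs : Summable fun n => logWeierstrassFactor n y) :
    log (doubleGamma y) = (y - 1) / 2 * log (2 * π) +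
      (-(y - 1) * y / 2 - γ * (y - 1) ^ 2 / 2) + ∑' n, logWeierstrassFactor n y := by
  have h_prod : ∏' n : ℕ, ((1 + (y - 1) / (n + 1)) ^ (n + 1) *
      exp (-(y - 1) + (y - 1) ^ 2 / (2 * (n + 1)))) = exp (∑' n, logWeierstrassFactor n y) := by
    rw [← hs.hasSum.rexp.tprod_eq]
    exact tprod_congr fun n => (exp_logWeierstrassFactor hy n).symm
  rw [doubleGamma, h_prod, log_mul (by positivity) (exp_pos _).ne',
    log_mul (by positivity) (exp_pos _).ne', log_rpow (by positivity), log_exp, log_exp]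

-- Each `logWeierstrassFactor n` vanishes at `1`, the point of convergence that termwise
-- differentiation on `Ioo a b` requires.
section
variable {a b y : ℝ} (ha : 0 < a) (ha_one : a ≤ 1) (h_one : 1 ∈ Ioo a b) (hy : y ∈ Ioo a b)
include ha ha_one h_one hy

lemma summable_logWeierstrassFactor_of_mem_Ioo :
    Summable fun n => logWeierstrassFactor n y :=
  summable_of_summable_hasDerivAt_of_isPreconnected (summable_one_div_add_one_sq.mul_left _)
    isOpen_Ioo isPreconnected_Ioo
    (fun n _ hz => hasDerivAt_logWeierstrassFactor n (ha.trans hz.1))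
    (fun n _ hz => norm_deriv_logWeierstrassFactor_le ha ha_one hz n) h_one
    (by simp [logWeierstrassFactor]) hy

lemma hasDerivAt_tsum_logWeierstrassFactor_of_mem_Ioo :
    HasDerivAt (fun z => ∑' n, logWeierstrassFactor n z) ((y - 1) * digammaSeries y) y := by
  rw [digammaSeries, ← tsum_mul_left]
  exact hasDerivAt_tsum_of_isPreconnected (summable_one_div_add_one_sq.mul_left _)
    isOpen_Ioo isPreconnected_Ioo
    (fun n _ hz => hasDerivAt_logWeierstrassFactor n (ha.trans hz.1))
    (fun n _ hz => norm_deriv_logWeierstrassFactor_le ha ha_one hz n) h_one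
    (by simp [logWeierstrassFactor]) hy

lemma hasDerivAt_log_doubleGamma_of_mem_Ioo :
    HasDerivAt (fun z => log (doubleGamma z))
      ((y - 1) * (digamma y - 1) + (log (2 * π) - 1) / 2) y := by
  have h_sub := (hasDerivAt_id y).sub_const 1
  have h_poly := ((h_sub.div_const 2).mul_const (log (2 * π))).add
    (((h_sub.neg.mul (hasDerivAt_id y)).div_const 2).sub
      (((h_sub.pow 2).const_mul γ).div_const 2))
  have h_log : (fun z => log (doubleGamma z)) =ᶠ[𝓝 y] fun z => (z - 1) / 2 * log (2 * π) +
      (-(z - 1) * z / 2 - γ * (z - 1) ^ 2 / 2) + ∑' n, logWeierstrassFactor n z := by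
    filter_upwards [isOpen_Ioo.mem_nhds hy] with z hz
    exact log_doubleGamma_eq (ha.trans hz.1)
      (summable_logWeierstrassFactor_of_mem_Ioo ha ha_one h_one hz)
  refine ((h_poly.add (hasDerivAt_tsum_logWeierstrassFactor_of_mem_Ioo ha ha_one h_one
    hy)).congr_of_eventuallyEq h_log).congr_deriv ?_
  rw [digamma_eq_neg_eulerMascheroniConstant_add_digammaSeries (ha.trans hy.1)]
  simp only [Pi.neg_apply, id, Nat.cast_ofNat]
  ring

end

theorem hasDerivAt_log_doubleGamma (x : ℝ) (hx : 0 < x) :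
    HasDerivAt (fun y => Real.log (doubleGamma y))
      ((x - 1) * (digamma x - 1) + (Real.log (2 * π) - 1) / 2) x ∧
    deriv (fun y => Real.log (doubleGamma y)) 1 = (Real.log (2 * π) - 1) / 2 := by
  obtain ⟨a, b, ha, ha_one, h_one, hx_mem⟩ :
      ∃ a b : ℝ, 0 < a ∧ a ≤ 1 ∧ 1 ∈ Ioo a b ∧ x ∈ Ioo a b :=
    ⟨min x 1 / 2, max x 1 + 1, by positivity, by linarith [min_le_right x 1],
      ⟨by linarith [min_le_right x 1], by linarith [le_max_right x 1]⟩,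
      ⟨by linarith [min_le_left x 1, lt_min hx one_pos], by linarith [le_max_left x 1]⟩⟩
  refine ⟨hasDerivAt_log_doubleGamma_of_mem_Ioo ha ha_one h_one hx_mem, ?_⟩
  rw [(hasDerivAt_log_doubleGamma_of_mem_Ioo ha ha_one h_one h_one).deriv]
  ring
end

section
/- Series representation of the logarithmic derivative: for every real x > 0, φ(1+x) = −1/2 + (1/2)·ln(2π) − x(1+γ) + ∑_{k=1}^∞ x²/(k(x+k)), where φ(y) denotes the derivative of ln G at y and γ is the Euler–Mascheroni constant. -/
/-!
Taking logarithms turns the Weierstrass product into the series `∑ₙ Lₙ(y)` of the logarithms of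
its factors, where `Lₙ(y) = (n+1) log (1 + (y-1)/(n+1)) - (y-1) + (y-1)²/(2(n+1))` has derivative
`(y-1)² / ((n+1)(n+y))`. These derivatives are bounded by a constant multiple of `1/(n+1)²`
uniformly on any interval `(a, b)` with `0 < a < 1 < b`, and `Lₙ(1) = 0`, so the series may be
differentiated term by term. At `y = 1 + x` the derivative of the elementary prefactor is
`½ log 2π - ½ - x(1 + γ)`.
-/

open Real

open Set

namespace DoubleGamma

noncomputable def logFactor (n : ℕ) (y : ℝ) : ℝ :=
  ((n : ℝ) + 1) * log (1 + (y - 1) / (n + 1)) + (-(y - 1) + (y - 1) ^ 2 / (2 * ((n : ℝ) + 1)))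

noncomputable def logFactorDeriv (n : ℕ) (y : ℝ) : ℝ :=
  (y - 1) ^ 2 / (((n : ℝ) + 1) * ((n : ℝ) + y))

lemma one_add_sub_one_div (n : ℕ) (y : ℝ) :
    1 + (y - 1) / ((n : ℝ) + 1) = ((n : ℝ) + y) / ((n : ℝ) + 1) := by
  field_simp
  ring

lemma one_add_sub_one_div_pos (n : ℕ) {y : ℝ} (hy : 0 < y) :
    0 < 1 + (y - 1) / ((n : ℝ) + 1) := by
  rw [one_add_sub_one_div]
  positivity

lemma exp_logFactor (n : ℕ) {y : ℝ} (hy : 0 < y) :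
    exp (logFactor n y) = (1 + (y - 1) / (n + 1)) ^ (n + 1) *
      exp (-(y - 1) + (y - 1) ^ 2 / (2 * (n + 1))) := by
  have hpow : exp (((n : ℝ) + 1) * log (1 + (y - 1) / (n + 1))) =
      (1 + (y - 1) / (n + 1)) ^ (n + 1) := by
    rw [← Nat.cast_add_one, exp_nat_mul, Nat.cast_add_one, exp_log (one_add_sub_one_div_pos n hy)]
  rw [logFactor, exp_add, hpow]

lemma logFactor_one (n : ℕ) : logFactor n 1 = 0 := by
  simp [logFactor]

lemma hasDerivAt_logFactor (n : ℕ) {y : ℝ} (hy : 0 < y) :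
    HasDerivAt (logFactor n) (logFactorDeriv n y) y := by
  have hbase : HasDerivAt (fun z : ℝ => 1 + (z - 1) / ((n : ℝ) + 1)) (1 / ((n : ℝ) + 1)) y := by
    simpa using (((hasDerivAt_id y).sub_const 1).div_const ((n : ℝ) + 1)).const_add 1
  have hpoly : HasDerivAt (fun z : ℝ => -(z - 1) + (z - 1) ^ 2 / (2 * ((n : ℝ) + 1)))
      (-1 + 2 * (y - 1) / (2 * ((n : ℝ) + 1))) y := by
    refine (((hasDerivAt_id y).sub_const 1).neg.add
      ((((hasDerivAt_id y).sub_const 1).pow 2).div_const (2 * ((n : ℝ) + 1)))).congr_deriv ?_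
    norm_num
  refine (((hbase.log (one_add_sub_one_div_pos n hy).ne').const_mul ((n : ℝ) + 1)).add
    hpoly).congr_deriv ?_
  have hny : (0 : ℝ) < n + y := by positivity
  rw [one_add_sub_one_div]
  unfold logFactorDeriv
  field_simp
  ring

lemma norm_logFactorDeriv_le (n : ℕ) {a b y : ℝ} (ha : 0 < a) (ha₁ : a < 1) (hb : 1 < b)
    (hy : y ∈ Ioo a b) : ‖logFactorDeriv n y‖ ≤ b ^ 2 / a / ((n : ℝ) + 1) ^ 2 := by
  obtain ⟨hay, hyb⟩ := hy
  have hy₀ : 0 < y := ha.trans hay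
  have hny : a * ((n : ℝ) + 1) ≤ (n : ℝ) + y := by nlinarith [n.cast_nonneg (α := ℝ)]
  have hsq : (y - 1) ^ 2 ≤ b ^ 2 := by nlinarith
  rw [Real.norm_eq_abs, logFactorDeriv, abs_of_nonneg (by positivity)]
  calc (y - 1) ^ 2 / (((n : ℝ) + 1) * ((n : ℝ) + y))
      ≤ b ^ 2 / (((n : ℝ) + 1) * (a * ((n : ℝ) + 1))) := by gcongr
    _ = b ^ 2 / a / ((n : ℝ) + 1) ^ 2 := by field_simp

lemma summable_div_succ_sq (c : ℝ) : Summable fun n : ℕ => c / ((n : ℝ) + 1) ^ 2 := by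
  have h := (summable_nat_add_iff 1).mpr (Real.summable_one_div_nat_pow.mpr one_lt_two)
  simpa [div_eq_mul_inv] using h.mul_left c

lemma summable_logFactor_of_mem_Ioo {a b y : ℝ} (ha : 0 < a) (ha₁ : a < 1) (hb : 1 < b)
    (hy : y ∈ Ioo a b) :
    Summable fun n => logFactor n y :=
  summable_of_summable_hasDerivAt_of_isPreconnected (summable_div_succ_sq (b ^ 2 / a))
    isOpen_Ioo isPreconnected_Ioo (fun n _ hz => hasDerivAt_logFactor n (ha.trans hz.1))
    (fun n _ hz => norm_logFactorDeriv_le n ha ha₁ hb hz) ⟨ha₁, hb⟩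
    (by simp [logFactor_one]) hy

lemma hasDerivAt_tsum_logFactor_of_mem_Ioo {a b y : ℝ} (ha : 0 < a) (ha₁ : a < 1) (hb : 1 < b)
    (hy : y ∈ Ioo a b) :
    HasDerivAt (fun z => ∑' n, logFactor n z) (∑' n, logFactorDeriv n y) y :=
  hasDerivAt_tsum_of_isPreconnected (summable_div_succ_sq (b ^ 2 / a))
    isOpen_Ioo isPreconnected_Ioo (fun n _ hz => hasDerivAt_logFactor n (ha.trans hz.1))
    (fun n _ hz => norm_logFactorDeriv_le n ha ha₁ hb hz) ⟨ha₁, hb⟩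
    (by simp [logFactor_one]) hy

lemma summable_logFactor {y : ℝ} (hy : 0 < y) : Summable fun n => logFactor n y :=
  summable_logFactor_of_mem_Ioo (a := min y 1 / 2) (b := y + 2) (by positivity)
    (by linarith [min_le_right y 1]) (by linarith) ⟨by linarith [min_le_left y 1], by linarith⟩

lemma hasDerivAt_tsum_logFactor {y : ℝ} (hy : 0 < y) :
    HasDerivAt (fun z => ∑' n, logFactor n z) (∑' n, logFactorDeriv n y) y :=
  hasDerivAt_tsum_logFactor_of_mem_Ioo (a := min y 1 / 2) (b := y + 2) (by positivity)
    (by linarith [min_le_right y 1]) (by linarith) ⟨by linarith [min_le_left y 1], by linarith⟩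

lemma log_doubleGamma {y : ℝ} (hy : 0 < y) :
    log (doubleGamma y) = (y - 1) / 2 * log (2 * π) +
      (-(y - 1) * y / 2 - eulerMascheroniConstant * (y - 1) ^ 2 / 2) + ∑' n, logFactor n y := by
  -- a genuine `HasProd`, so the `∏'` in `doubleGamma` is not a junk value
  have hprod := (summable_logFactor hy).hasSum.rexp
  simp only [Function.comp_def, exp_logFactor _ hy] at hprod
  rw [doubleGamma, hprod.tprod_eq, log_mul (by positivity) (exp_pos _).ne',
    log_mul (by positivity) (exp_pos _).ne', log_rpow (by positivity), log_exp, log_exp]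

lemma hasDerivAt_log_doubleGamma {y : ℝ} (hy : 0 < y) :
    HasDerivAt (fun z => log (doubleGamma z))
      (1 / 2 * log (2 * π) - (2 * y - 1) / 2 - eulerMascheroniConstant * (y - 1) +
        ∑' n, logFactorDeriv n y) y := by
  have hlin : HasDerivAt (fun z : ℝ => (z - 1) / 2 * log (2 * π)) (1 / 2 * log (2 * π)) y := by
    simpa using (((hasDerivAt_id y).sub_const 1).div_const 2).mul_const (log (2 * π))
  have hquad : HasDerivAt
      (fun z : ℝ => -(z - 1) * z / 2 - eulerMascheroniConstant * (z - 1) ^ 2 / 2)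
      (-(2 * y - 1) / 2 - eulerMascheroniConstant * (y - 1)) y := by
    refine (((((hasDerivAt_id y).sub_const 1).neg.mul (hasDerivAt_id y)).div_const 2).sub
      ((((hasDerivAt_id y).sub_const 1).pow 2).const_mul eulerMascheroniConstant
        |>.div_const 2)).congr_deriv ?_
    simp only [id, Pi.neg_apply]
    ring
  have hlog : (fun z => log (doubleGamma z)) =ᶠ[nhds y] fun z => (z - 1) / 2 * log (2 * π) +
      (-(z - 1) * z / 2 - eulerMascheroniConstant * (z - 1) ^ 2 / 2) + ∑' n, logFactor n z :=
    Filter.eventually_of_mem (Ioi_mem_nhds hy) fun z hz => log_doubleGamma hz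
  refine (((hlin.add hquad).add (hasDerivAt_tsum_logFactor hy)).congr_of_eventuallyEq
    hlog).congr_deriv ?_
  ring

end DoubleGamma

open DoubleGamma in
theorem deriv_log_doubleGamma_series (x : ℝ) (hx : 0 < x) :
    deriv (fun y => Real.log (doubleGamma y)) (1 + x) =
      -1 / 2 + 1 / 2 * Real.log (2 * π) - x * (1 + Real.eulerMascheroniConstant) +
        ∑' k : ℕ, x ^ 2 / (((k : ℝ) + 1) * (x + ((k : ℝ) + 1))) := by
  rw [(hasDerivAt_log_doubleGamma (by linarith : (0 : ℝ) < 1 + x)).deriv]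
  have hseries : ∑' n, logFactorDeriv n (1 + x) =
      ∑' k : ℕ, x ^ 2 / (((k : ℝ) + 1) * (x + ((k : ℝ) + 1))) :=
    tsum_congr fun k => by rw [logFactorDeriv]; ring
  rw [hseries]
  ring
end

section
/- Taylor expansion of ln G at 1: for every real x with |x| < 1, ln G(1+x) = (x/2)·(ln(2π) − 1) − (1+γ)·x²/2 + ∑_{j=3}^∞ (−1)^{j−1} · ζ(j−1) · x^j / j, where ζ is the Riemann zeta function and γ is the Euler–Mascheroni constant, and the series converges. -/
/-!
Taking logarithms in the Weierstrass product, the `n`-th factor of `doubleGamma (1 + x)`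
contributes `(n + 1) log (1 + x / (n + 1)) - x + x ^ 2 / (2 (n + 1))`, whose Taylor series
starts at `x ^ 3` with `x ^ (j + 3)`-coefficient `(-1) ^ j / ((j + 3) (n + 1) ^ (j + 2))`.
For `|x| < 1` this double series is dominated by `|x| ^ j / (n + 1) ^ 2`, hence absolutely
summable, and summing it over `n` first turns each coefficient into `(-1) ^ j ζ(j + 2) / (j + 3)`.
-/

open Real

/-- The Riemann zeta function `ζ(m) = ∑_{n ≥ 1} n ^ (-m)` at integer arguments. -/
noncomputable def zetaNat (m : ℕ) : ℝ := ∑' n : ℕ, 1 / ((n : ℝ) + 1) ^ m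

theorem hasSum_log_one_add_sub_quadratic {y : ℝ} (hy : |y| < 1) :
    HasSum (fun j : ℕ => (-1) ^ j * y ^ (j + 3) / (j + 3)) (log (1 + y) - y + y ^ 2 / 2) := by
  have hlog := (hasSum_pow_div_log_of_abs_lt_one (x := -y) (by rwa [abs_neg])).neg
  rw [sub_neg_eq_add, neg_neg] at hlog
  have htail := (hasSum_nat_add_iff' 2).2 hlog
  rw [show log (1 + y) - y + y ^ 2 / 2 = log (1 + y) - ∑ i ∈ Finset.range 2,
      -((-y) ^ (i + 1) / ((i : ℝ) + 1)) by norm_num [Finset.sum_range_succ]; ring]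
  refine htail.congr_fun fun j => ?_
  rw [neg_pow y]
  push_cast
  ring

theorem hasSum_mul_log_one_add_div_sub_quadratic {x a : ℝ} (ha : 0 < a) (hx : |x| < a) :
    HasSum (fun j : ℕ => (-1) ^ j * x ^ (j + 3) / ((j + 3) * a ^ (j + 2)))
      (a * log (1 + x / a) - x + x ^ 2 / (2 * a)) := by
  have hy : |x / a| < 1 := by rwa [abs_div, abs_of_pos ha, div_lt_one ha]
  rw [show a * log (1 + x / a) - x + x ^ 2 / (2 * a) =
      a * (log (1 + x / a) - x / a + (x / a) ^ 2 / 2) by field_simp]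
  refine ((hasSum_log_one_add_sub_quadratic hy).mul_left a).congr_fun fun j => ?_
  rw [div_pow, pow_add a j 3, pow_add a j 2]
  field_simp

noncomputable def doubleGammaTerm (x : ℝ) (p : ℕ × ℕ) : ℝ :=
  (-1) ^ p.2 * x ^ (p.2 + 3) / ((p.2 + 3) * ((p.1 : ℝ) + 1) ^ (p.2 + 2))

theorem abs_doubleGammaTerm_le {x : ℝ} (hx : |x| ≤ 1) (p : ℕ × ℕ) :
    |doubleGammaTerm x p| ≤ 1 / ((p.1 : ℝ) + 1) ^ 2 * |x| ^ p.2 := by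
  obtain ⟨n, j⟩ := p
  have hn : (1 : ℝ) ≤ n + 1 := le_add_of_nonneg_left n.cast_nonneg
  have hnum : |x| ^ (j + 3) ≤ |x| ^ j := pow_le_pow_of_le_one (abs_nonneg x) hx (by omega)
  have hden : ((n : ℝ) + 1) ^ 2 ≤ (j + 3) * ((n : ℝ) + 1) ^ (j + 2) :=
    calc ((n : ℝ) + 1) ^ 2 ≤ ((n : ℝ) + 1) ^ (j + 2) := pow_le_pow_right₀ hn (by omega)
      _ ≤ (j + 3) * ((n : ℝ) + 1) ^ (j + 2) :=
        le_mul_of_one_le_left (by positivity) (by linarith [j.cast_nonneg (α := ℝ)])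
  have hpos : (0 : ℝ) < (j + 3) * ((n : ℝ) + 1) ^ (j + 2) := by positivity
  simp only [doubleGammaTerm]
  rw [abs_div, abs_mul, abs_pow, abs_pow, abs_neg, abs_one, one_pow, one_mul, abs_of_pos hpos,
    one_div_mul_eq_div]
  exact div_le_div₀ (by positivity) hnum (by positivity) hden

theorem summable_one_div_nat_add_one_pow {m : ℕ} (hm : 2 ≤ m) :
    Summable (fun n : ℕ => 1 / ((n : ℝ) + 1) ^ m) := by
  simpa using (summable_nat_add_iff 1).2 (summable_one_div_nat_pow.2 hm)

theorem summable_doubleGammaTerm {x : ℝ} (hx : |x| < 1) : Summable (doubleGammaTerm x) := by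
  have hbound : Summable fun p : ℕ × ℕ => 1 / ((p.1 : ℝ) + 1) ^ 2 * |x| ^ p.2 :=
    Summable.mul_of_nonneg (f := fun n : ℕ => 1 / ((n : ℝ) + 1) ^ 2)
      (g := fun j : ℕ => |x| ^ j)
      (summable_one_div_nat_add_one_pow le_rfl) (summable_geometric_of_lt_one (abs_nonneg x) hx)
      (fun _ => by positivity) (fun _ => by positivity)
  exact hbound.of_norm_bounded fun p => (norm_eq_abs _).trans_le (abs_doubleGammaTerm_le hx.le p)

theorem hasSum_doubleGammaTerm_row {x : ℝ} (hx : |x| < 1) (n : ℕ) :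
    HasSum (fun j : ℕ => doubleGammaTerm x (n, j))
      ((n + 1) * log (1 + x / (n + 1)) - x + x ^ 2 / (2 * (n + 1))) := by
  have hn : (1 : ℝ) ≤ n + 1 := le_add_of_nonneg_left n.cast_nonneg
  simp only [doubleGammaTerm]
  exact hasSum_mul_log_one_add_div_sub_quadratic (by positivity) (hx.trans_le hn)

theorem hasSum_doubleGammaTerm_col (x : ℝ) (j : ℕ) :
    HasSum (fun n : ℕ => doubleGammaTerm x (n, j))
      ((-1) ^ j * zetaNat (j + 2) * x ^ (j + 3) / (j + 3)) := by
  rw [show (-1) ^ j * zetaNat (j + 2) * x ^ (j + 3) / (j + 3) =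
      (-1) ^ j * x ^ (j + 3) / (j + 3) * zetaNat (j + 2) by ring]
  refine ((summable_one_div_nat_add_one_pow (m := j + 2) (by omega)).hasSum.mul_left _).congr_fun
    fun n => ?_
  simp only [doubleGammaTerm, mul_one_div, div_div]

theorem exp_mul_log_add_eq_pow_mul_exp {u : ℝ} (hu : 0 < u) (k : ℕ) (c : ℝ) :
    exp (k * log u + c) = u ^ k * exp c := by
  rw [exp_add, exp_nat_mul, exp_log hu]

theorem log_doubleGamma_one_add {x T : ℝ} (hx : |x| < 1)
    (hT : HasSum (fun n : ℕ => (n + 1) * log (1 + x / (n + 1)) - x + x ^ 2 / (2 * (n + 1))) T) :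
    log (doubleGamma (1 + x)) =
      x / 2 * (log (2 * π) - 1) - (1 + eulerMascheroniConstant) * x ^ 2 / 2 + T := by
  have hfactor : ∀ n : ℕ, exp ((n + 1) * log (1 + x / (n + 1)) - x + x ^ 2 / (2 * (n + 1))) =
      (1 + x / (n + 1)) ^ (n + 1) * exp (-x + x ^ 2 / (2 * (n + 1))) := fun n => by
    have hn : (1 : ℝ) ≤ n + 1 := le_add_of_nonneg_left n.cast_nonneg
    have hu : 0 < 1 + x / ((n : ℝ) + 1) := by
      have : -1 < x / ((n : ℝ) + 1) := by
        rw [lt_div_iff₀ (by positivity)]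
        linarith [neg_abs_le x]
      linarith
    rw [← exp_mul_log_add_eq_pow_mul_exp hu]
    push_cast
    ring_nf
  have hP := hT.rexp
  simp only [Function.comp_def, hfactor] at hP
  rw [doubleGamma, add_sub_cancel_left, hP.tprod_eq, log_mul (by positivity) (exp_ne_zero _),
    log_mul (by positivity) (exp_ne_zero _), log_rpow (by positivity), log_exp, log_exp]
  ring

theorem log_doubleGamma_taylor (x : ℝ) (hx : |x| < 1) :
    HasSum
      (fun j : ℕ => (-1 : ℝ) ^ (j + 3 - 1) * zetaNat (j + 3 - 1) * x ^ (j + 3) / (j + 3))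
      (Real.log (doubleGamma (1 + x)) -
        (x / 2 * (Real.log (2 * π) - 1) -
          (1 + Real.eulerMascheroniConstant) * x ^ 2 / 2)) := by
  have hT := (summable_doubleGammaTerm hx).hasSum
  have hrows := hT.prod_fiberwise (hasSum_doubleGammaTerm_row hx)
  have hcols := ((Equiv.prodComm ℕ ℕ).hasSum_iff.2 hT).prod_fiberwise
    (hasSum_doubleGammaTerm_col x)
  rw [log_doubleGamma_one_add hx hrows, add_sub_cancel_left]
  exact hcols.congr_fun fun j => by
    rw [show j + 3 - 1 = j + 2 from rfl]
    ring
end
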